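/- For any function f : S → ℝ and any policies π', π with π(a|s) > 0 for all s, a, the following two bounds hold: J(π') - J(π) ≥ (1/(1-γ)) (L_{π,f}(π') - 2 ε_f^{π'} D_TV(d^{π'}‖d^π)) and J(π') - J(π) ≤ (1/(1-γ)) (L_{π,f}(π') + 2 ε_f^{π'} D_TV(d^{π'}‖d^π)), where D_TV(d^{π'}‖d^π) = (1/2) ∑_s |d^{π'}(s) - d^π(s)|. When π' = π, both sides are identically zero. -/

import Mathlib

open BigOperators Finset Matrix

noncomputable section

variable {S A : Type*}

/-- Policy transition matrix (column-stochastic): entry `(s', s)` is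
`P_pol(s'|s) = ∑ a, P(s'|s,a) pol(a|s)`. -/
def Pmat [Fintype A] (P : S → A → S → ℝ) (pol : S → A → ℝ) : Matrix S S ℝ :=
  fun s' s => ∑ a, P s a s' * pol s a

/-- Discounted future state distribution `d^π = (1-γ) ∑_t γ^t P_π^t μ`. -/
def dFut [Fintype S] [DecidableEq S] [Fintype A] (γ : ℝ) (P : S → A → S → ℝ)
    (μ : S → ℝ) (pol : S → A → ℝ) : S → ℝ :=
  fun s => (1 - γ) * ∑' t : ℕ, γ ^ t * ((Pmat P pol ^ t) *ᵥ μ) s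

/-- Discounted return `J(π)` (also used as the cost return `J_C(π)` with a cost `C`
in place of the reward `R`). -/
def Jret [Fintype S] [DecidableEq S] [Fintype A] (γ : ℝ) (P : S → A → S → ℝ)
    (R : S → A → S → ℝ) (μ : S → ℝ) (pol : S → A → ℝ) : ℝ :=
  (1 / (1 - γ)) * ∑ s, dFut γ P μ pol s * (∑ a, pol s a * (∑ s', P s a s' * R s a s'))

/-- Total variational divergence between action distributions at state `s`. -/
def DTV [Fintype A] (pol' pol : S → A → ℝ) (s : S) : ℝ :=
  (1 / 2) * ∑ a, |pol' s a - pol s a|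

/-- Kullback–Leibler divergence between action distributions at state `s`. -/
def DKL [Fintype A] (pol' pol : S → A → ℝ) (s : S) : ℝ :=
  ∑ a, pol' s a * Real.log (pol' s a / pol s a)

/-- Advantage function `A^π(s,a) = Q^π(s,a) - V^π(s)` built from a value function `V`
(also used for cost advantages with a cost `C` in place of `R`). -/
def Adv [Fintype S] (γ : ℝ) (P : S → A → S → ℝ) (R : S → A → S → ℝ)
    (V : S → ℝ) (s : S) (a : A) : ℝ :=
  (∑ s', P s a s' * (R s a s' + γ * V s')) - V s

/-- `ε_f^{π'} = max_s |E_{a∼π'(·|s), s'∼P}[δ_f(s,a,s')]|` where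
`δ_f(s,a,s') = R(s,a,s') + γ f(s') - f(s)`. -/
def epsF [Fintype S] [Fintype A] (γ : ℝ) (P : S → A → S → ℝ) (R : S → A → S → ℝ)
    (f : S → ℝ) (pol' : S → A → ℝ) : ℝ :=
  ⨆ s, |∑ a, pol' s a * (∑ s', P s a s' * (R s a s' + γ * f s' - f s))|

/-- Surrogate `L_{π,f}(π') = E_{s∼d^π, a∼π, s'∼P}[(π'(a|s)/π(a|s) - 1) δ_f(s,a,s')]`. -/
def Lsurr [Fintype S] [DecidableEq S] [Fintype A] (γ : ℝ) (P : S → A → S → ℝ)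
    (R : S → A → S → ℝ) (μ : S → ℝ) (f : S → ℝ) (pol pol' : S → A → ℝ) : ℝ :=
  ∑ s, dFut γ P μ pol s * (∑ a, pol s a * (∑ s', P s a s' *
    ((pol' s a / pol s a - 1) * (R s a s' + γ * f s' - f s))))

/-!
For any policy `q`, write `δ̄_q(s)` for the expected TD error of `f` at `s` under `q`. Pairing the
flow equation `d^q = (1 - γ) μ + γ P_q d^q` with `f` telescopes the `f`-terms of `δ̄_q`, leaving
`(1 - γ) J(q) = (1 - γ) ⟨μ, f⟩ + ⟨d^q, δ̄_q⟩`. Importance sampling turns the surrogate into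
`L_{π,f}(π') = ⟨d^π, δ̄_{π'} - δ̄_π⟩`, so `(1 - γ)(J(π') - J(π)) - L_{π,f}(π') = ⟨d^{π'} - d^π, δ̄_{π'}⟩`,
which Hölder's inequality bounds by `ε_f^{π'} ‖d^{π'} - d^π‖₁`.
-/

namespace Matrix

variable {n : Type*} [Fintype n] [DecidableEq n]

theorem sum_abs_mulVec_le_of_mem_colStochastic {M : Matrix n n ℝ} (hM : M ∈ colStochastic ℝ n)
    (v : n → ℝ) : ∑ i, |(M *ᵥ v) i| ≤ ∑ j, |v j| :=
  calc ∑ i, |(M *ᵥ v) i| ≤ ∑ i, ∑ j, M i j * |v j| :=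
        sum_le_sum fun i _ => (abs_sum_le_sum_abs _ _).trans_eq <| by
          simp only [abs_mul, abs_of_nonneg (nonneg_of_mem_colStochastic hM)]
    _ = ∑ j, |v j| := by
        rw [sum_comm]
        simp only [← sum_mul, sum_col_of_mem_colStochastic hM, one_mul]

theorem summable_geometric_pow_mulVec_of_mem_colStochastic {M : Matrix n n ℝ}
    (hM : M ∈ colStochastic ℝ n) (v : n → ℝ) {γ : ℝ} (hγ0 : 0 ≤ γ) (hγ1 : γ < 1) :
    Summable fun t : ℕ => γ ^ t • (M ^ t *ᵥ v) := by
  refine Pi.summable.mpr fun i => .of_norm_bounded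
    ((summable_geometric_of_lt_one hγ0 hγ1).mul_right (∑ j, |v j|)) fun t => ?_
  rw [Pi.smul_apply, smul_eq_mul, Real.norm_eq_abs, abs_mul, abs_of_nonneg (pow_nonneg hγ0 t)]
  gcongr
  exact (single_le_sum (fun j _ => abs_nonneg ((M ^ t *ᵥ v) j)) (mem_univ i)).trans
    (sum_abs_mulVec_le_of_mem_colStochastic (pow_mem hM t) v)

theorem tsum_geometric_pow_mulVec_eq (M : Matrix n n ℝ) (v : n → ℝ) {γ : ℝ}
    (h : Summable fun t : ℕ => γ ^ t • (M ^ t *ᵥ v)) :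
    ∑' t : ℕ, γ ^ t • (M ^ t *ᵥ v) = v + γ • (M *ᵥ ∑' t : ℕ, γ ^ t • (M ^ t *ᵥ v)) := by
  set x := ∑' t : ℕ, γ ^ t • (M ^ t *ᵥ v)
  have hM : HasSum (fun t : ℕ => γ • (M *ᵥ (γ ^ t • (M ^ t *ᵥ v)))) (γ • (M *ᵥ x)) :=
    (h.hasSum.mapL (mulVecLin M).toContinuousLinearMap).const_smul γ
  simp only [mulVec_smul, mulVec_mulVec, smul_smul, ← pow_succ'] at hM
  have hshift := (hasSum_nat_add_iff' 1).mpr h.hasSum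
  simp only [range_one, sum_singleton, pow_zero, one_smul, one_mulVec] at hshift
  rw [← hshift.unique hM, add_sub_cancel]

end Matrix

theorem abs_dotProduct_le_iSup_mul_sum {n : Type*} [Fintype n] (u w : n → ℝ) :
    |u ⬝ᵥ w| ≤ (⨆ i, |w i|) * ∑ i, |u i| :=
  calc |u ⬝ᵥ w| ≤ ∑ i, |u i| * |w i| := (abs_sum_le_sum_abs _ _).trans_eq <| by
        simp only [abs_mul]
    _ ≤ ∑ i, |u i| * ⨆ j, |w j| := sum_le_sum fun i _ =>
        mul_le_mul_of_nonneg_left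
          (le_ciSup (f := fun j => |w j|) (Set.finite_range _).bddAbove i) (abs_nonneg _)
    _ = (⨆ i, |w i|) * ∑ i, |u i| := by rw [← sum_mul, mul_comm]

section MDP

variable [Fintype S] [Fintype A] {γ : ℝ} {P : S → A → S → ℝ}

def expectedReward (P : S → A → S → ℝ) (R : S → A → S → ℝ) (q : S → A → ℝ) (s : S) : ℝ :=
  ∑ a, q s a * ∑ s', P s a s' * R s a s'

/-- `epsF γ P R f q` unfolds to `⨆ s, |expectedTDError γ P R f q s|`. -/
def expectedTDError (γ : ℝ) (P : S → A → S → ℝ) (R : S → A → S → ℝ) (f : S → ℝ)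
    (q : S → A → ℝ) (s : S) : ℝ :=
  ∑ a, q s a * ∑ s', P s a s' * (R s a s' + γ * f s' - f s)

theorem expectedTDError_eq (hP1 : ∀ s a, ∑ s', P s a s' = 1)
    (γ : ℝ) (R : S → A → S → ℝ) (f : S → ℝ) {q : S → A → ℝ} (hq1 : ∀ s, ∑ a, q s a = 1) :
    expectedTDError γ P R f q = expectedReward P R q + γ • (f ᵥ* Pmat P q) - f := by
  ext s
  have hPf : (f ᵥ* Pmat P q) s = ∑ a, q s a * ∑ s', P s a s' * f s' := by
    simp only [vecMul, dotProduct, Pmat, mul_sum]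
    rw [sum_comm]
    exact sum_congr rfl fun a _ => sum_congr rfl fun s' _ => by ring
  have hf : ∑ a, q s a * ∑ s', P s a s' * f s = f s := by
    simp only [← sum_mul, hP1, one_mul, hq1]
  have hsplit : expectedTDError γ P R f q s = expectedReward P R q s
      + γ * ∑ a, q s a * ∑ s', P s a s' * f s' - ∑ a, q s a * ∑ s', P s a s' * f s := by
    simp only [expectedTDError, expectedReward, mul_sum, ← sum_add_distrib, ← sum_sub_distrib]
    exact sum_congr rfl fun a _ => sum_congr rfl fun s' _ => by ring
  rw [hsplit, hf, ← hPf]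
  rfl

variable [DecidableEq S]

theorem Pmat_mem_colStochastic (hP0 : ∀ s a s', 0 ≤ P s a s') (hP1 : ∀ s a, ∑ s', P s a s' = 1)
    {pol : S → A → ℝ} (hpol0 : ∀ s a, 0 ≤ pol s a) (hpol1 : ∀ s, ∑ a, pol s a = 1) :
    Pmat P pol ∈ colStochastic ℝ S := by
  refine mem_colStochastic_iff_sum.mpr ⟨fun s' s => ?_, fun s => ?_⟩
  · exact sum_nonneg fun a _ => mul_nonneg (hP0 s a s') (hpol0 s a)
  · unfold Pmat
    rw [sum_comm]
    simp only [← sum_mul, hP1, one_mul, hpol1]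

theorem dFut_eq_flow (hγ0 : 0 ≤ γ) (hγ1 : γ < 1) (hP0 : ∀ s a s', 0 ≤ P s a s')
    (hP1 : ∀ s a, ∑ s', P s a s' = 1) (μ : S → ℝ)
    {pol : S → A → ℝ} (hpol0 : ∀ s a, 0 ≤ pol s a) (hpol1 : ∀ s, ∑ a, pol s a = 1) :
    dFut γ P μ pol = (1 - γ) • μ + γ • (Pmat P pol *ᵥ dFut γ P μ pol) := by
  have hsum := summable_geometric_pow_mulVec_of_mem_colStochastic
    (Pmat_mem_colStochastic hP0 hP1 hpol0 hpol1) μ hγ0 hγ1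
  have hd : dFut γ P μ pol = (1 - γ) • ∑' t : ℕ, γ ^ t • (Pmat P pol ^ t *ᵥ μ) := by
    ext s
    simp only [dFut, Pi.smul_apply, tsum_apply hsum, smul_eq_mul]
  rw [hd]
  conv_lhs => rw [tsum_geometric_pow_mulVec_eq _ _ hsum]
  rw [mulVec_smul, smul_add, smul_comm γ (1 - γ)]

theorem dFut_dotProduct_smul_vecMul_Pmat_sub (hγ0 : 0 ≤ γ) (hγ1 : γ < 1) (hP0 : ∀ s a s', 0 ≤ P s a s')
    (hP1 : ∀ s a, ∑ s', P s a s' = 1) (μ : S → ℝ) {pol : S → A → ℝ}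
    (hpol0 : ∀ s a, 0 ≤ pol s a) (hpol1 : ∀ s, ∑ a, pol s a = 1) (f : S → ℝ) :
    dFut γ P μ pol ⬝ᵥ (γ • (f ᵥ* Pmat P pol) - f) = -((1 - γ) * (μ ⬝ᵥ f)) := by
  set d := dFut γ P μ pol
  have hflow : γ • (Pmat P pol *ᵥ d) = d - (1 - γ) • μ := by
    rw [eq_sub_iff_add_eq, add_comm]
    exact (dFut_eq_flow hγ0 hγ1 hP0 hP1 μ hpol0 hpol1).symm
  calc d ⬝ᵥ (γ • (f ᵥ* Pmat P pol) - f)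
      = f ⬝ᵥ (γ • (Pmat P pol *ᵥ d)) - f ⬝ᵥ d := by
        rw [dotProduct_sub, dotProduct_smul, dotProduct_smul, dotProduct_comm d,
          ← dotProduct_mulVec, dotProduct_comm d]
    _ = -((1 - γ) * (μ ⬝ᵥ f)) := by
        rw [hflow, dotProduct_sub, dotProduct_smul, dotProduct_comm f μ, smul_eq_mul]
        ring

theorem one_sub_mul_Jret_eq (hγ0 : 0 ≤ γ) (hγ1 : γ < 1) (hP0 : ∀ s a s', 0 ≤ P s a s')
    (hP1 : ∀ s a, ∑ s', P s a s' = 1) (R : S → A → S → ℝ) (μ : S → ℝ) (f : S → ℝ)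
    {q : S → A → ℝ} (hq0 : ∀ s a, 0 ≤ q s a) (hq1 : ∀ s, ∑ a, q s a = 1) :
    (1 - γ) * Jret γ P R μ q
      = dFut γ P μ q ⬝ᵥ expectedTDError γ P R f q + (1 - γ) * (μ ⬝ᵥ f) := by
  have hJ : (1 - γ) * Jret γ P R μ q = dFut γ P μ q ⬝ᵥ expectedReward P R q := by
    rw [Jret, ← mul_assoc, mul_one_div_cancel (by linarith), one_mul]
    rfl
  rw [hJ, expectedTDError_eq hP1 γ R f hq1, add_sub_assoc, dotProduct_add,
    dFut_dotProduct_smul_vecMul_Pmat_sub hγ0 hγ1 hP0 hP1 μ hq0 hq1 f]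
  ring

theorem Lsurr_eq (R : S → A → S → ℝ) (μ : S → ℝ) (f : S → ℝ) {pol : S → A → ℝ}
    (hpol : ∀ s a, pol s a ≠ 0) (pol' : S → A → ℝ) :
    Lsurr γ P R μ f pol pol' = dFut γ P μ pol ⬝ᵥ
      (expectedTDError γ P R f pol' - expectedTDError γ P R f pol) := by
  refine sum_congr rfl fun s _ => congrArg _ ?_
  simp only [Pi.sub_apply, expectedTDError, ← sum_sub_distrib, mul_sum]
  refine sum_congr rfl fun a _ => sum_congr rfl fun s' _ => ?_
  field_simp [hpol s a]

theorem Lsurr_self (R : S → A → S → ℝ) (μ : S → ℝ) (f : S → ℝ) (pol : S → A → ℝ) :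
    Lsurr γ P R μ f pol pol = 0 :=
  sum_eq_zero fun s _ => mul_eq_zero_of_right _ <| sum_eq_zero fun a _ => by
    by_cases h : pol s a = 0
    · rw [h, zero_mul]
    · simp [div_self h]

end MDP

theorem policy_bound_via_state_tv_general
    [Fintype S] [DecidableEq S] [Fintype A]
    (γ : ℝ) (hγ0 : 0 ≤ γ) (hγ1 : γ < 1)
    (P : S → A → S → ℝ) (hP0 : ∀ s a s', 0 ≤ P s a s')
    (hP1 : ∀ s a, (∑ s', P s a s') = 1)
    (μ : S → ℝ)
    (R : S → A → S → ℝ) (f : S → ℝ)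
    (pol pol' : S → A → ℝ)
    (hpol0 : ∀ s a, 0 < pol s a) (hpol1 : ∀ s, (∑ a, pol s a) = 1)
    (hpol'0 : ∀ s a, 0 ≤ pol' s a) (hpol'1 : ∀ s, (∑ a, pol' s a) = 1) :
    (Jret γ P R μ pol' - Jret γ P R μ pol
      ≥ (1 / (1 - γ)) * (Lsurr γ P R μ f pol pol'
          - 2 * epsF γ P R f pol'
              * ((1 / 2) * ∑ s, |dFut γ P μ pol' s - dFut γ P μ pol s|)))
    ∧ (Jret γ P R μ pol' - Jret γ P R μ pol
      ≤ (1 / (1 - γ)) * (Lsurr γ P R μ f pol pol'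
          + 2 * epsF γ P R f pol'
              * ((1 / 2) * ∑ s, |dFut γ P μ pol' s - dFut γ P μ pol s|)))
    ∧ (pol' = pol →
        Jret γ P R μ pol' - Jret γ P R μ pol = 0
        ∧ (1 / (1 - γ)) * (Lsurr γ P R μ f pol pol'
            - 2 * epsF γ P R f pol'
                * ((1 / 2) * ∑ s, |dFut γ P μ pol' s - dFut γ P μ pol s|)) = 0
        ∧ (1 / (1 - γ)) * (Lsurr γ P R μ f pol pol'
            + 2 * epsF γ P R f pol'
                * ((1 / 2) * ∑ s, |dFut γ P μ pol' s - dFut γ P μ pol s|)) = 0) := by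
  have h1γ : 0 < 1 - γ := by linarith
  have hdiff : (1 - γ) * (Jret γ P R μ pol' - Jret γ P R μ pol) - Lsurr γ P R μ f pol pol'
      = (dFut γ P μ pol' - dFut γ P μ pol) ⬝ᵥ expectedTDError γ P R f pol' := by
    rw [mul_sub, one_sub_mul_Jret_eq hγ0 hγ1 hP0 hP1 R μ f hpol'0 hpol'1,
      one_sub_mul_Jret_eq hγ0 hγ1 hP0 hP1 R μ f (fun s a => (hpol0 s a).le) hpol1,
      Lsurr_eq R μ f (fun s a => (hpol0 s a).ne'), sub_dotProduct, dotProduct_sub]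
    ring
  have hbound : |(1 - γ) * (Jret γ P R μ pol' - Jret γ P R μ pol) - Lsurr γ P R μ f pol pol'|
      ≤ epsF γ P R f pol' * ∑ s, |dFut γ P μ pol' s - dFut γ P μ pol s| := by
    rw [hdiff]
    exact abs_dotProduct_le_iSup_mul_sum _ _
  obtain ⟨hlo, hhi⟩ := abs_le.mp hbound
  refine ⟨?_, ?_, fun h => ?_⟩
  · rw [ge_iff_le, one_div_mul_eq_div, div_le_iff₀ h1γ]
    linarith
  · rw [one_div_mul_eq_div, le_div_iff₀ h1γ]
    linarith
  · subst h
    simp [Lsurr_self]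

/-- **Lemma 2 of the appendix.** For any `f : S → ℝ` and policies `π'`, `π` (with `π` positive),
`J(π') - J(π) ≥ (1/(1-γ))(L_{π,f}(π') - 2 ε_f^{π'} D_TV(d^{π'}‖d^π))` and
`J(π') - J(π) ≤ (1/(1-γ))(L_{π,f}(π') + 2 ε_f^{π'} D_TV(d^{π'}‖d^π))`;
when `π' = π` both sides are identically zero. -/
theorem policy_bound_via_state_tv
    [Fintype S] [DecidableEq S] [Nonempty S] [Fintype A] [Nonempty A]
    (γ : ℝ) (hγ0 : 0 ≤ γ) (hγ1 : γ < 1)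
    (P : S → A → S → ℝ) (hP0 : ∀ s a s', 0 ≤ P s a s')
    (hP1 : ∀ s a, (∑ s', P s a s') = 1)
    (μ : S → ℝ) (hμ0 : ∀ s, 0 ≤ μ s) (hμ1 : (∑ s, μ s) = 1)
    (R : S → A → S → ℝ) (f : S → ℝ)
    (pol pol' : S → A → ℝ)
    (hpol0 : ∀ s a, 0 < pol s a) (hpol1 : ∀ s, (∑ a, pol s a) = 1)
    (hpol'0 : ∀ s a, 0 ≤ pol' s a) (hpol'1 : ∀ s, (∑ a, pol' s a) = 1) :
    (Jret γ P R μ pol' - Jret γ P R μ pol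
      ≥ (1 / (1 - γ)) * (Lsurr γ P R μ f pol pol'
          - 2 * epsF γ P R f pol'
              * ((1 / 2) * ∑ s, |dFut γ P μ pol' s - dFut γ P μ pol s|)))
    ∧ (Jret γ P R μ pol' - Jret γ P R μ pol
      ≤ (1 / (1 - γ)) * (Lsurr γ P R μ f pol pol'
          + 2 * epsF γ P R f pol'
              * ((1 / 2) * ∑ s, |dFut γ P μ pol' s - dFut γ P μ pol s|)))
    ∧ (pol' = pol →
        Jret γ P R μ pol' - Jret γ P R μ pol = 0
        ∧ (1 / (1 - γ)) * (Lsurr γ P R μ f pol pol'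
            - 2 * epsF γ P R f pol'
                * ((1 / 2) * ∑ s, |dFut γ P μ pol' s - dFut γ P μ pol s|)) = 0
        ∧ (1 / (1 - γ)) * (Lsurr γ P R μ f pol pol'
            + 2 * epsF γ P R f pol'
                * ((1 / 2) * ∑ s, |dFut γ P μ pol' s - dFut γ P μ pol s|)) = 0) :=
  policy_bound_via_state_tv_general γ hγ0 hγ1 P hP0 hP1 μ R f pol pol' hpol0 hpol1 hpol'0 hpol'1
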